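/- Let A be an n×n max-plus matrix with λ(A) = 0 and let τ be a cyclic permutation on K ⊆ {1,...,n} whose cycle mean equals 0. Then for every l ∈ {1,...,n} and every i ∈ K: A*_{il} = A*_{iτ(i)} + A*_{τ(i)l} and A*_{li} = A*_{lτ⁻¹(i)} + A*_{τ⁻¹(i)i}. In particular, columns of A* indexed by vertices of the same critical cycle are max-plus proportional to each other. -/

import Mathlib

/-!
A closed walk splits at a repeated vertex into two shorter closed walks, so it decomposes into
elementary cycles; hence `λ(A) ≤ 0` gives `A*ᵢᵢ = 0`, while `A*` always satisfies the triangle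
inequality `A*ᵢⱼ + A*ⱼₖ ≤ A*ᵢₖ`. On a critical cycle the arc `i → τ i` together with the rest of
the cycle is a closed walk of weight `0`, so `A*_{i,τi} + A*_{τi,i} = 0`: both entries are finite
and opposite. Going around `i → τ i → i` then turns the triangle inequality through `τ i` (for
rows) and through `τ⁻¹ i` (for columns) into an equality, and the columns at `i` and `τ i` differ
by the real constant `A*_{i,τi}`; proportionality along the whole cycle follows by transitivity.
-/

namespace MaxPlus

/-- Max-plus (tropical) matrix product over `EReal` (`⊥ = -∞` is the max-plus zero,
`+` is the max-plus multiplication, `⊔`/`⨆` is the max-plus addition). -/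
noncomputable def mmul {n : ℕ} (A B : Matrix (Fin n) (Fin n) EReal) : Matrix (Fin n) (Fin n) EReal :=
  fun i j => ⨆ k, A i k + B k j

/-- The max-plus identity matrix. -/
noncomputable def mId (n : ℕ) : Matrix (Fin n) (Fin n) EReal := fun i j => if i = j then 0 else ⊥

/-- Max-plus matrix powers. -/
noncomputable def mpow {n : ℕ} (A : Matrix (Fin n) (Fin n) EReal) : ℕ → Matrix (Fin n) (Fin n) EReal
  | 0 => mId n
  | m + 1 => mmul (mpow A m) A

/-- The max-plus Kleene star `A* = I ⊕ A ⊕ A² ⊕ ⋯` (entrywise supremum of all powers). -/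
noncomputable def mstar {n : ℕ} (A : Matrix (Fin n) (Fin n) EReal) : Matrix (Fin n) (Fin n) EReal :=
  fun i j => ⨆ m, mpow A m i j

/-- Weight of the cycle determined by the list `l = [i₁,…,i_k]`,
namely `A i₁ i₂ + ⋯ + A i_k i₁`. -/
noncomputable def cycleWeight {n : ℕ} (A : Matrix (Fin n) (Fin n) EReal) (l : List (Fin n)) : EReal :=
  ((l.zip (l.rotate 1)).map fun p => A p.1 p.2).sum

/-- A nonempty list of pairwise distinct indices, representing an elementary cycle. -/
def IsCycle {n : ℕ} (l : List (Fin n)) : Prop := l ≠ [] ∧ l.Nodup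

/-- All elementary cycles have nonpositive weight, i.e. the maximal cycle mean `λ(A) ≤ 0`. -/
def CycleBound {n : ℕ} (A : Matrix (Fin n) (Fin n) EReal) : Prop :=
  ∀ l : List (Fin n), IsCycle l → cycleWeight A l ≤ 0

/-- A definite matrix: maximal cycle mean `0` and zero (max-plus unit) diagonal.
(The diagonal entries give cycles of weight `0`, so `λ(A) = 0` is equivalent to
`CycleBound A` here.) -/
def Definite {n : ℕ} (A : Matrix (Fin n) (Fin n) EReal) : Prop :=
  CycleBound A ∧ ∀ i, A i i = 0

/-- Max-plus action of a matrix on a vector: `(A ⊙ x)_i = max_j (A_{ij} + x_j)`. -/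
noncomputable def mapVec {n : ℕ} (A : Matrix (Fin n) (Fin n) EReal) (x : Fin n → EReal) :
    Fin n → EReal :=
  fun i => ⨆ j, A i j + x j

/-- The max-plus eigenspace of `A` for the eigenvalue `0`. -/
def eig {n : ℕ} (A : Matrix (Fin n) (Fin n) EReal) : Set (Fin n → EReal) :=
  {x | mapVec A x = x}

/-- The max-plus column span of a matrix. -/
def mspan {n : ℕ} (A : Matrix (Fin n) (Fin n) EReal) : Set (Fin n → EReal) :=
  {y | ∃ α : Fin n → EReal, y = fun i => ⨆ j, α j + A i j}

end MaxPlus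

namespace EReal

theorem iSup_add_iSup_le {ι κ : Sort*} {f : ι → EReal} {g : κ → EReal} {c : EReal}
    (h : ∀ i j, f i + g j ≤ c) : (⨆ i, f i) + (⨆ j, g j) ≤ c :=
  add_le_of_forall_lt fun _ ha _ hb => by
    obtain ⟨i, hi⟩ := lt_iSup_iff.mp ha
    obtain ⟨j, hj⟩ := lt_iSup_iff.mp hb
    exact (add_le_add hi.le hj.le).trans (h i j)

theorem iSup_add_le {ι : Sort*} {f : ι → EReal} {b c : EReal} (h : ∀ i, f i + b ≤ c) :
    (⨆ i, f i) + b ≤ c := by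
  simpa using iSup_add_iSup_le (g := fun _ : Unit => b) fun i _ => h i

theorem add_iSup_le {ι : Sort*} {a c : EReal} {g : ι → EReal} (h : ∀ j, a + g j ≤ c) :
    a + (⨆ j, g j) ≤ c := by
  simpa using iSup_add_iSup_le (f := fun _ : Unit => a) fun _ j => h j

theorem coe_toReal_of_add_eq_zero {x y : EReal} (h : x + y = 0) : (x.toReal : EReal) = x := by
  induction x <;> induction y <;> simp_all

end EReal

namespace Equiv.Perm

theorem IsCycle.sum_support_eq_sum_range_pow {α M : Type*} [Fintype α] [DecidableEq α]
    [AddCommMonoid M] {τ : Perm α} (hτ : τ.IsCycle) {x : α} (hx : x ∈ τ.support) (g : α → M) :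
    ∑ y ∈ τ.support, g y = ∑ k ∈ Finset.range τ.support.card, g ((τ ^ k) x) := by
  have hx' : τ x ≠ x := mem_support.mp hx
  have hsupp : (τ.toList x).toFinset = τ.support := by
    ext y
    simpa [mem_toList_iff, hx] using (isCycle_iff_sameCycle hx').mp hτ (y := y)
  calc ∑ y ∈ τ.support, g y = ((τ.toList x).map g).sum := by
        rw [← hsupp, List.sum_toFinset _ (nodup_toList τ x)]
    _ = ∑ k ∈ Finset.range τ.support.card, g ((τ ^ k) x) := by
        rw [toList, hτ.cycleOf_eq hx', ← List.range_map_iterate, List.map_map]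
        simp only [Function.comp_def, iterate_eq_pow]
        rfl

end Equiv.Perm

theorem List.exists_eq_append_cons_append_cons_of_not_nodup {α : Type*} :
    ∀ {l : List α}, ¬ l.Nodup → ∃ a x b c, l = a ++ x :: (b ++ x :: c)
  | [], h => absurd List.nodup_nil h
  | y :: l, h => by
    by_cases hy : y ∈ l
    · obtain ⟨b, c, rfl⟩ := List.mem_iff_append.mp hy
      exact ⟨[], y, b, c, rfl⟩
    · obtain ⟨a, x, b, c, rfl⟩ :=
        exists_eq_append_cons_append_cons_of_not_nodup fun hl => h (List.nodup_cons.mpr ⟨hy, hl⟩)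
      exact ⟨y :: a, x, b, c, rfl⟩

namespace MaxPlus

variable {n : ℕ} (A : Matrix (Fin n) (Fin n) EReal)

theorem mId_mmul (B : Matrix (Fin n) (Fin n) EReal) : mmul (mId n) B = B := by
  ext i j
  refine le_antisymm (iSup_le fun k => ?_) (le_iSup_of_le i (by simp [mId]))
  by_cases hik : i = k <;> simp [mId, hik]

theorem mpow_one : mpow A 1 = A := mId_mmul A

theorem mpow_le_mstar (m : ℕ) (i j : Fin n) : mpow A m i j ≤ mstar A i j :=
  le_iSup (fun m => mpow A m i j) m

theorem le_mstar (i j : Fin n) : A i j ≤ mstar A i j := by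
  simpa [mpow_one] using mpow_le_mstar A 1 i j

theorem mpow_add_mpow_le (m p : ℕ) (i j k : Fin n) :
    mpow A m i j + mpow A p j k ≤ mpow A (m + p) i k := by
  induction p generalizing k with
  | zero =>
    by_cases hjk : j = k <;> simp [mpow, mId, hjk]
  | succ p ih =>
    refine EReal.add_iSup_le fun t => ?_
    rw [← add_assoc]
    exact le_iSup_of_le t (add_le_add_left (ih t) _)

theorem mstar_add_mstar_le (i j k : Fin n) : mstar A i j + mstar A j k ≤ mstar A i k :=
  EReal.iSup_add_iSup_le fun m p => (mpow_add_mpow_le A m p i j k).trans (mpow_le_mstar A _ i k)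

theorem sum_le_mpow (v : ℕ → Fin n) (m : ℕ) :
    ∑ r ∈ Finset.range m, A (v r) (v (r + 1)) ≤ mpow A m (v 0) (v m) := by
  induction m with
  | zero => simp [mpow, mId]
  | succ m ih =>
    rw [Finset.sum_range_succ]
    exact le_iSup_of_le (v m) (add_le_add_left ih _)

/-- `l` lists the interior vertices of a walk from `a` to `b`. -/
noncomputable def pathWeight : Fin n → List (Fin n) → Fin n → EReal
  | a, [], b => A a b
  | a, c :: l, b => A a c + pathWeight c l b

theorem pathWeight_append (a x b : Fin n) (l r : List (Fin n)) :
    pathWeight A a (l ++ x :: r) b = pathWeight A a l x + pathWeight A x r b := by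
  induction l generalizing a with
  | nil => rfl
  | cons c l ih => simp only [List.cons_append, pathWeight, ih, add_assoc]

theorem cycleWeight_cons (a : Fin n) (l : List (Fin n)) :
    cycleWeight A (a :: l) = pathWeight A a l a := by
  suffices ∀ (l : List (Fin n)) (a b : Fin n),
      (((a :: l).zip (l ++ [b])).map fun p => A p.1 p.2).sum = pathWeight A a l b by
    rw [cycleWeight, List.rotate_cons_succ, List.rotate_zero, this]
  intro l
  induction l with
  | nil => simp [pathWeight]
  | cons c l ih => intro a b; simp [pathWeight, ih c b]

theorem cycleWeight_append_comm (p q : List (Fin n)) :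
    cycleWeight A (p ++ q) = cycleWeight A (q ++ p) := by
  cases p with
  | nil => simp
  | cons u p =>
    cases q with
    | nil => simp
    | cons w q =>
      simp only [List.cons_append, cycleWeight_cons, pathWeight_append]
      exact add_comm _ _

theorem cycleWeight_cons_append_cons (x : Fin n) (b c : List (Fin n)) :
    cycleWeight A (x :: (b ++ x :: c)) = cycleWeight A (x :: b) + cycleWeight A (x :: c) := by
  simp only [cycleWeight_cons, pathWeight_append]

variable {A}

theorem CycleBound.cycleWeight_nonpos (hb : CycleBound A) (l : List (Fin n)) :
    cycleWeight A l ≤ 0 := by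
  induction h : l.length using Nat.strong_induction_on generalizing l with
  | _ m ih =>
    by_cases hnil : l = []
    · simp [hnil, cycleWeight]
    by_cases hl : l.Nodup
    · exact hb l ⟨hnil, hl⟩
    obtain ⟨a, x, b, c, rfl⟩ := List.exists_eq_append_cons_append_cons_of_not_nodup hl
    rw [cycleWeight_append_comm, List.cons_append, List.append_assoc, List.cons_append,
      cycleWeight_cons_append_cons]
    simp only [List.length_append, List.length_cons] at h
    exact add_nonpos (ih _ (by simp only [List.length_cons]; omega) _ rfl)
      (ih _ (by simp only [List.length_cons, List.length_append]; omega) _ rfl)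

theorem mpow_succ_add_le_of_pathWeight_le {m : ℕ} {i j : Fin n} {y c : EReal}
    (h : ∀ l : List (Fin n), l.length = m → pathWeight A i l j + y ≤ c) :
    mpow A (m + 1) i j + y ≤ c := by
  induction m generalizing j y with
  | zero => simpa [mpow_one, pathWeight] using h [] rfl
  | succ m ih =>
    refine EReal.iSup_add_le fun k => ?_
    rw [add_assoc]
    refine ih fun l hl => ?_
    have hext : pathWeight A i (l ++ [k]) j = pathWeight A i l k + A k j :=
      pathWeight_append A i k j l []
    rw [← add_assoc, ← hext]
    exact h _ (by simp [hl])

theorem CycleBound.mstar_apply_self (hb : CycleBound A) (i : Fin n) : mstar A i i = 0 := by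
  refine le_antisymm (iSup_le fun m => ?_) (by simpa [mpow, mId] using mpow_le_mstar A 0 i i)
  cases m with
  | zero => simp [mpow, mId]
  | succ m =>
    simpa using mpow_succ_add_le_of_pathWeight_le (y := 0) fun l _ => by
      simpa [← cycleWeight_cons] using hb.cycleWeight_nonpos (i :: l)

theorem mstar_row_eq_add_of_add_eq_zero {i j : Fin n}
    (h : mstar A i j + mstar A j i = 0) (l : Fin n) : mstar A i l = mstar A i j + mstar A j l := by
  refine le_antisymm ?_ (mstar_add_mstar_le A i j l)
  calc mstar A i l = mstar A i j + (mstar A j i + mstar A i l) := by rw [← add_assoc, h, zero_add]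
    _ ≤ mstar A i j + mstar A j l := add_le_add le_rfl (mstar_add_mstar_le A j i l)

theorem mstar_col_eq_add_of_add_eq_zero {i j : Fin n}
    (h : mstar A i j + mstar A j i = 0) (l : Fin n) : mstar A l j = mstar A l i + mstar A i j := by
  refine le_antisymm ?_ (mstar_add_mstar_le A l i j)
  calc mstar A l j = mstar A l j + mstar A j i + mstar A i j := by
        rw [add_assoc, add_comm (mstar A j i), h, add_zero]
    _ ≤ mstar A l i + mstar A i j := add_le_add (mstar_add_mstar_le A l j i) le_rfl

theorem mstar_add_mstar_eq_zero_of_critical (hb : CycleBound A) {τ : Equiv.Perm (Fin n)}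
    (hτ : τ.IsCycle) (hw : ∑ i ∈ τ.support, A i (τ i) = 0) {i : Fin n} (hi : i ∈ τ.support) :
    mstar A i (τ i) + mstar A (τ i) i = 0 := by
  refine le_antisymm ((mstar_add_mstar_le A i (τ i) i).trans (hb.mstar_apply_self i).le) ?_
  obtain ⟨K, hK⟩ : ∃ K, τ.support.card = K + 1 :=
    Nat.exists_eq_add_one.mpr (Finset.card_pos.mpr ⟨i, hi⟩)
  have hret : (τ ^ (K + 1)) i = i := by rw [← hK, ← hτ.orderOf, pow_orderOf_eq_one]; rfl
  have hrest := sum_le_mpow A (fun r => (τ ^ (r + 1)) i) K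
  simp only [hret] at hrest
  calc (0 : EReal) = ∑ r ∈ Finset.range (K + 1), A ((τ ^ r) i) ((τ ^ (r + 1)) i) := by
        rw [← hw, hτ.sum_support_eq_sum_range_pow hi, hK]
        simp only [pow_succ', Equiv.Perm.mul_apply]
    _ = A i (τ i) + ∑ r ∈ Finset.range K, A ((τ ^ (r + 1)) i) ((τ ^ (r + 1 + 1)) i) := by
        rw [Finset.sum_range_succ', add_comm]
        simp
    _ ≤ mstar A i (τ i) + mstar A (τ i) i :=
        add_le_add (le_mstar A i (τ i)) (hrest.trans (mpow_le_mstar A K _ _))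

def Proportional {ι : Type*} (x y : ι → EReal) : Prop := ∃ c : ℝ, ∀ k, x k = c + y k

theorem Proportional.trans {ι : Type*} {x y z : ι → EReal} (hxy : Proportional x y)
    (hyz : Proportional y z) : Proportional x z := by
  obtain ⟨c, hc⟩ := hxy
  obtain ⟨d, hd⟩ := hyz
  exact ⟨c + d, fun k => by rw [hc, hd, ← add_assoc, EReal.coe_add]⟩

theorem mstar_col_proportional_of_critical (hb : CycleBound A) {τ : Equiv.Perm (Fin n)}
    (hτ : τ.IsCycle) (hw : ∑ i ∈ τ.support, A i (τ i) = 0) {i j : Fin n} (hi : i ∈ τ.support)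
    (hj : j ∈ τ.support) : Proportional (fun k => mstar A k i) (fun k => mstar A k j) := by
  have hstep : ∀ y ∈ τ.support,
      Proportional (fun k => mstar A k (τ y)) (fun k => mstar A k y) := by
    intro y hy
    have h := mstar_add_mstar_eq_zero_of_critical hb hτ hw hy
    refine ⟨(mstar A y (τ y)).toReal, fun k => ?_⟩
    show mstar A k (τ y) = _ + mstar A k y
    rw [EReal.coe_toReal_of_add_eq_zero h, mstar_col_eq_add_of_add_eq_zero h, add_comm]
  have hpow : ∀ r : ℕ, Proportional (fun k => mstar A k ((τ ^ r) j)) (fun k => mstar A k j) := by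
    intro r
    induction r with
    | zero => exact ⟨0, fun k => by simp⟩
    | succ r ih =>
      rw [pow_succ', Equiv.Perm.mul_apply]
      exact (hstep _ (Equiv.Perm.pow_apply_mem_support.mpr hj)).trans ih
  obtain ⟨r, rfl⟩ :=
    hτ.exists_pow_eq (Equiv.Perm.mem_support.mp hj) (Equiv.Perm.mem_support.mp hi)
  exact hpow r

theorem mstar_along_critical_cycle_general {n : ℕ} (A : Matrix (Fin n) (Fin n) EReal)
    (hb : CycleBound A)
    (τ : Equiv.Perm (Fin n)) (hτ : τ.IsCycle)
    (hw : (∑ i ∈ τ.support, A i (τ i)) = 0) :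
    (∀ l : Fin n, ∀ i ∈ τ.support,
        mstar A i l = mstar A i (τ i) + mstar A (τ i) l ∧
        mstar A l i = mstar A l (τ⁻¹ i) + mstar A (τ⁻¹ i) i) ∧
      ∀ i ∈ τ.support, ∀ j ∈ τ.support, ∃ c : ℝ,
        ∀ k, mstar A k i = (c : EReal) + mstar A k j := by
  refine ⟨fun l i hi => ⟨?_, ?_⟩,
    fun i hi j hj => mstar_col_proportional_of_critical hb hτ hw hi hj⟩
  · exact mstar_row_eq_add_of_add_eq_zero (mstar_add_mstar_eq_zero_of_critical hb hτ hw hi) l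
  · have hτi : τ (τ⁻¹ i) = i := τ.apply_symm_apply i
    have hi' : τ⁻¹ i ∈ τ.support := Equiv.Perm.apply_mem_support.mp (by rwa [hτi])
    have h := mstar_add_mstar_eq_zero_of_critical hb hτ hw hi'
    rw [hτi] at h
    exact mstar_col_eq_add_of_add_eq_zero h l

/-- Along a critical cycle (a cyclic permutation `τ` whose cycle weight is `0`, hence
cycle mean `0 = λ(A)`), the Kleene star satisfies
`A*_{il} = A*_{iτ(i)} + A*_{τ(i)l}` and `A*_{li} = A*_{lτ⁻¹(i)} + A*_{τ⁻¹(i)i}`;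
in particular columns of `A*` indexed by vertices of the cycle are max-plus
proportional. -/
theorem mstar_along_critical_cycle {n : ℕ} (A : Matrix (Fin n) (Fin n) EReal)
    (hA : ∀ i j, A i j ≠ ⊤) (hb : CycleBound A)
    (τ : Equiv.Perm (Fin n)) (hτ : τ.IsCycle)
    (hw : (∑ i ∈ τ.support, A i (τ i)) = 0) :
    (∀ l : Fin n, ∀ i ∈ τ.support,
        mstar A i l = mstar A i (τ i) + mstar A (τ i) l ∧
        mstar A l i = mstar A l (τ⁻¹ i) + mstar A (τ⁻¹ i) i) ∧
      ∀ i ∈ τ.support, ∀ j ∈ τ.support, ∃ c : ℝ,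
        ∀ k, mstar A k i = (c : EReal) + mstar A k j :=
  mstar_along_critical_cycle_general A hb τ hτ hw

end MaxPlus
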